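/- arXiv:math/0602193 — 8 statements merged into one kernel-verified Lean document; each statement's English description precedes it below -/
import Mathlib

section
/- The hexagon with vertices ±(1,0), ±(0,1), ±(1,-1) in ℤ² is lattice-regular: for any two of its face-flags there exists an affine transformation x ↦ Ax + b with A ∈ GL(2,ℤ), b ∈ ℤ², preserving the hexagon and mapping one flag to the other. -/
/-- The real point corresponding to an integer point. -/
def toR2 (v : Fin 2 → ℤ) : Fin 2 → ℝ := fun i => (v i : ℝ)

/-- The points `V 0, …, V (m-1)` are in strictly convex position:
each one is a vertex (extreme point) of the convex hull of all of them. -/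
def ConvexPosition (m : ℕ) (V : Fin m → Fin 2 → ℤ) : Prop :=
  ∀ i, toR2 (V i) ∉ convexHull ℝ (toR2 '' (V '' {j | j ≠ i}))

/-- `(u, w)` is a face-flag of the polygon with vertices `V 0, …, V (m-1)`
(in cyclic order): `u` is a vertex of the polygon and `w` is the other
endpoint of an edge at `u`. -/
def AdjPair (m : ℕ) [NeZero m] (V : Fin m → Fin 2 → ℤ) (u w : Fin 2 → ℤ) : Prop :=
  ∃ i : Fin m, (u = V i ∧ w = V (i + 1)) ∨ (u = V (i + 1) ∧ w = V i)

/-- The polygon with vertices `V 0, …, V (m-1)` (in cyclic order) is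
lattice-regular: for any two face-flags there is a lattice-affine
transformation preserving the polygon and taking one flag to the other. -/
def LatticeRegular (m : ℕ) [NeZero m] (V : Fin m → Fin 2 → ℤ) : Prop :=
  ∀ u w u' w' : Fin 2 → ℤ, AdjPair m V u w → AdjPair m V u' w' →
    ∃ (A : Matrix (Fin 2) (Fin 2) ℤ) (b : Fin 2 → ℤ),
      (A.det = 1 ∨ A.det = -1) ∧
      ((fun x => A.mulVec x + b) '' Set.range V = Set.range V) ∧
      A.mulVec u + b = u' ∧ A.mulVec w + b = w'

namespace HexProof

def Vh : Fin 6 → Fin 2 → ℤ := ![![1,0], ![0,1], ![-1,1], ![-1,0], ![0,-1], ![1,-1]]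
def R : Matrix (Fin 2) (Fin 2) ℤ := !![0,-1; 1,1]
def S : Matrix (Fin 2) (Fin 2) ℤ := !![1,1; 0,-1]

lemma hR : ∀ j : Fin 6, R.mulVec (Vh j) = Vh (j + 1) := by decide
lemma hS : ∀ j : Fin 6, S.mulVec (Vh j) = Vh (-j) := by decide
lemma detR : R.det = 1 := by decide
lemma detS : S.det = -1 := by decide

open Fin.NatCast in
lemma hRn : ∀ (n : ℕ) (j : Fin 6), (R ^ n).mulVec (Vh j) = Vh (j + (n : Fin 6)) := by
  intro n
  induction n with
  | zero => intro j; simp [Matrix.one_mulVec]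
  | succ n ih =>
    intro j
    rw [pow_succ, ← Matrix.mulVec_mulVec, hR, ih]
    push_cast
    congr 1; ext; simp only [Fin.val_add, Fin.val_natCast, Fin.val_one]; omega

open Fin.NatCast in
lemma rot_map (c j : Fin 6) : (R ^ c.val).mulVec (Vh j) = Vh (j + c) := by
  rw [hRn, Fin.cast_val_eq_self]

lemma refl_map (c j : Fin 6) : ((R ^ c.val) * S).mulVec (Vh j) = Vh (c - j) := by
  rw [← Matrix.mulVec_mulVec, hS, rot_map]
  abel_nf

lemma rot_det (c : Fin 6) : (R ^ c.val).det = 1 := by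
  rw [Matrix.det_pow, detR, one_pow]

lemma refl_det (c : Fin 6) : ((R ^ c.val) * S).det = -1 := by
  rw [Matrix.det_mul, rot_det, detS]; ring

lemma image_eq (M : Matrix (Fin 2) (Fin 2) ℤ) (σ : Fin 6 → Fin 6)
    (hσ : Function.Surjective σ) (h : ∀ j, M.mulVec (Vh j) = Vh (σ j)) :
    (fun x => M.mulVec x + 0) '' Set.range Vh = Set.range Vh := by
  have h1 : (fun x : Fin 2 → ℤ => M.mulVec x + 0) = M.mulVec := by funext x; simp
  rw [h1, ← Set.range_comp]
  have h2 : M.mulVec ∘ Vh = Vh ∘ σ := funext h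
  rw [h2, hσ.range_comp]

lemma rot_image (c : Fin 6) :
    (fun x => (R ^ c.val).mulVec x + 0) '' Set.range Vh = Set.range Vh :=
  image_eq _ (fun j => j + c) (fun y => ⟨y - c, sub_add_cancel y c⟩) (rot_map c)

lemma refl_image (c : Fin 6) :
    (fun x => ((R ^ c.val) * S).mulVec x + 0) '' Set.range Vh = Set.range Vh :=
  image_eq _ (fun j => c - j) (fun y => ⟨c - y, sub_sub_cancel c y⟩) (refl_map c)

end HexProof

/-- The hexagon with vertices `±(1,0)`, `±(0,1)`, `±(1,-1)` is lattice-regular. -/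
theorem hexagon_lattice_regular :
    LatticeRegular 6
      ![![1,0], ![0,1], ![-1,1], ![-1,0], ![0,-1], ![1,-1]] := by
  show LatticeRegular 6 HexProof.Vh
  intro u w u' w' h h'
  obtain ⟨i, hi⟩ := h
  obtain ⟨i', hi'⟩ := h'
  open HexProof in
  rcases hi with ⟨hu, hw⟩ | ⟨hu, hw⟩ <;> rcases hi' with ⟨hu', hw'⟩ | ⟨hu', hw'⟩ <;>
    subst hu <;> subst hw <;> subst hu' <;> subst hw'
  · exact ⟨R ^ (i' - i).val, 0, Or.inl (rot_det _), rot_image _,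
      by rw [rot_map, add_zero]; exact congrArg Vh (by abel),
      by rw [rot_map, add_zero]; exact congrArg Vh (by abel)⟩
  · exact ⟨(R ^ (i + i' + 1).val) * S, 0, Or.inr (refl_det _), refl_image _,
      by rw [refl_map, add_zero]; exact congrArg Vh (by abel),
      by rw [refl_map, add_zero]; exact congrArg Vh (by abel)⟩
  · exact ⟨(R ^ (i + i' + 1).val) * S, 0, Or.inr (refl_det _), refl_image _,
      by rw [refl_map, add_zero]; exact congrArg Vh (by abel),
      by rw [refl_map, add_zero]; exact congrArg Vh (by abel)⟩
  · exact ⟨R ^ (i' - i).val, 0, Or.inl (rot_det _), rot_image _,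
      by rw [rot_map, add_zero]; exact congrArg Vh (by abel),
      by rw [rot_map, add_zero]; exact congrArg Vh (by abel)⟩
end

section
/- The unit square with vertices (0,0), (1,0), (0,1), (1,1) and the square with vertices (0,0), (1,0), (1,2), (2,2) are both lattice-regular, and they are not lattice-congruent to each other. -/
open Matrix

def IsLatticeSymmetry {m : ℕ} (V : Fin m → Fin 2 → ℤ) (σ : Fin m → Fin m) : Prop :=
  ∃ (A : Matrix (Fin 2) (Fin 2) ℤ) (b : Fin 2 → ℤ),
    (A.det = 1 ∨ A.det = -1) ∧ ∀ i, A *ᵥ V i + b = V (σ i)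

namespace IsLatticeSymmetry

variable {m : ℕ} {V : Fin m → Fin 2 → ℤ}

theorem id : IsLatticeSymmetry V fun i => i :=
  ⟨1, 0, Or.inl det_one, fun i => by simp⟩

theorem comp {σ τ : Fin m → Fin m} (hσ : IsLatticeSymmetry V σ) (hτ : IsLatticeSymmetry V τ) :
    IsLatticeSymmetry V (σ ∘ τ) := by
  obtain ⟨A, b, hA, hσ⟩ := hσ
  obtain ⟨B, c, hB, hτ⟩ := hτ
  refine ⟨A * B, A *ᵥ c + b, ?_, fun i => ?_⟩
  · rw [det_mul]
    rcases hA with hA | hA <;> rcases hB with hB | hB <;> simp [hA, hB]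
  · rw [Function.comp_apply, ← hσ, ← hτ, mulVec_add, mulVec_mulVec, add_assoc]

theorem exists_image_eq_and_flag {σ : Fin m → Fin m} (hσ : IsLatticeSymmetry V σ)
    (hsurj : Function.Surjective σ) {i j i' j' : Fin m} (hi : σ i = i') (hj : σ j = j') :
    ∃ (A : Matrix (Fin 2) (Fin 2) ℤ) (b : Fin 2 → ℤ), (A.det = 1 ∨ A.det = -1) ∧
      ((fun x => A *ᵥ x + b) '' Set.range V = Set.range V) ∧
      A *ᵥ V i + b = V i' ∧ A *ᵥ V j + b = V j' := by
  obtain ⟨A, b, hA, hσV⟩ := hσ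
  refine ⟨A, b, hA, ?_, hi ▸ hσV i, hj ▸ hσV j⟩
  rw [← Set.range_comp, show (fun x => A *ᵥ x + b) ∘ V = V ∘ σ from funext hσV,
    hsurj.range_comp]

variable [NeZero m]

open Fin.NatCast in
theorem rotate (h : IsLatticeSymmetry V (· + 1)) (k : Fin m) : IsLatticeSymmetry V (· + k) := by
  suffices ∀ n : ℕ, IsLatticeSymmetry V (· + (n : Fin m)) by
    simpa only [Fin.cast_val_eq_self] using this k.val
  intro n
  induction n with
  | zero => simpa only [Nat.cast_zero, add_zero] using id
  | succ n ih =>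
    convert h.comp ih using 1
    ext1 i
    simp only [Function.comp_apply, Nat.cast_succ, add_assoc]

theorem reflect (hr : IsLatticeSymmetry V (· + 1)) (hs : IsLatticeSymmetry V (- ·)) (k : Fin m) :
    IsLatticeSymmetry V (k - ·) := by
  convert (hr.rotate k).comp hs using 1
  ext1 i
  simp only [Function.comp_apply, neg_add_eq_sub]

end IsLatticeSymmetry

theorem latticeRegular_of_rotation_reflection {m : ℕ} [NeZero m] {V : Fin m → Fin 2 → ℤ}
    (hr : IsLatticeSymmetry V (· + 1)) (hs : IsLatticeSymmetry V (- ·)) :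
    LatticeRegular m V := by
  rintro u w u' w' ⟨i, ⟨rfl, rfl⟩ | ⟨rfl, rfl⟩⟩ ⟨i', ⟨rfl, rfl⟩ | ⟨rfl, rfl⟩⟩
  · exact (hr.rotate (i' - i)).exists_image_eq_and_flag (add_right_surjective _)
      (by abel) (by abel)
  · exact (hr.reflect hs (i + i' + 1)).exists_image_eq_and_flag
      (Equiv.subLeft (i + i' + 1)).surjective (by abel) (by abel)
  · exact (hr.reflect hs (i + i' + 1)).exists_image_eq_and_flag
      (Equiv.subLeft (i + i' + 1)).surjective (by abel) (by abel)
  · exact (hr.rotate (i' - i)).exists_image_eq_and_flag (add_right_surjective _)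
      (by abel) (by abel)

theorem two_dvd_det_of_two_dvd_row (A : Matrix (Fin 2) (Fin 2) ℤ) (h₀ : 2 ∣ A 1 0)
    (h₁ : 2 ∣ A 1 1) : 2 ∣ A.det := by
  rw [det_fin_two]
  exact (dvd_mul_of_dvd_right h₁ _).sub (dvd_mul_of_dvd_right h₀ _)

theorem not_unimodular_of_two_dvd_snd (A : Matrix (Fin 2) (Fin 2) ℤ) (b : Fin 2 → ℤ)
    (h₀ : 2 ∣ (A *ᵥ ![0, 0] + b) 1) (h₁ : 2 ∣ (A *ᵥ ![1, 0] + b) 1)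
    (h₂ : 2 ∣ (A *ᵥ ![0, 1] + b) 1) : ¬ (A.det = 1 ∨ A.det = -1) := by
  simp only [mulVec_fin_two, cons_val_zero, cons_val_one, cons_val_fin_one, mul_zero, mul_one,
    add_zero, zero_add, Pi.add_apply] at h₀ h₁ h₂
  have h := two_dvd_det_of_two_dvd_row A ((dvd_add_left h₀).mp h₁) ((dvd_add_left h₀).mp h₂)
  rintro (hdet | hdet) <;> rw [hdet] at h <;> norm_num at h

theorem unitSquare_rotation :
    IsLatticeSymmetry ![![0,0], ![1,0], ![1,1], ![0,1]] (· + 1) :=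
  ⟨!![0, -1; 1, 0], ![1, 0], by decide, by decide⟩

theorem unitSquare_reflection :
    IsLatticeSymmetry ![![0,0], ![1,0], ![1,1], ![0,1]] (- ·) :=
  ⟨!![0, 1; 1, 0], 0, by decide, by decide⟩

theorem tiltedSquare_rotation :
    IsLatticeSymmetry ![![0,0], ![1,0], ![2,2], ![1,2]] (· + 1) :=
  ⟨!![1, -1; 2, -1], ![1, 0], by decide, by decide⟩

theorem tiltedSquare_reflection :
    IsLatticeSymmetry ![![0,0], ![1,0], ![2,2], ![1,2]] (- ·) :=
  ⟨!![1, 0; 2, -1], 0, by decide, by decide⟩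

/-- The unit square with vertices `(0,0), (1,0), (0,1), (1,1)` and the square
with vertices `(0,0), (1,0), (1,2), (2,2)` are both lattice-regular, but they
are not lattice-congruent to each other. -/
theorem two_squares_regular_not_congruent :
    LatticeRegular 4 ![![0,0], ![1,0], ![1,1], ![0,1]] ∧
    LatticeRegular 4 ![![0,0], ![1,0], ![2,2], ![1,2]] ∧
    ¬ ∃ (A : Matrix (Fin 2) (Fin 2) ℤ) (b : Fin 2 → ℤ),
      (A.det = 1 ∨ A.det = -1) ∧
      (fun x => A.mulVec x + b) ''
          ({![0,0], ![1,0], ![1,1], ![0,1]} : Set (Fin 2 → ℤ)) =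
        ({![0,0], ![1,0], ![1,2], ![2,2]} : Set (Fin 2 → ℤ)) := by
  refine ⟨latticeRegular_of_rotation_reflection unitSquare_rotation unitSquare_reflection,
    latticeRegular_of_rotation_reflection tiltedSquare_rotation tiltedSquare_reflection, ?_⟩
  rintro ⟨A, b, hdet, himg⟩
  have heven (v : Fin 2 → ℤ) (hv : v ∈ ({![0,0], ![1,0], ![1,1], ![0,1]} : Set (Fin 2 → ℤ))) :
      2 ∣ (A *ᵥ v + b) 1 := by
    have hw := himg ▸ Set.mem_image_of_mem (fun x => A *ᵥ x + b) hv
    rcases hw with hw | hw | hw | hw <;> rw [hw] <;> decide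
  exact not_unimodular_of_two_dvd_snd A b (heven _ (by simp)) (heven _ (by simp))
    (heven _ (by simp)) hdet
end

section
/- For n ≥ 2 and a positive integer p, consider the simplex S with vertices V₀ = 0, Vᵢ = eᵢ for i = 1,…,n−1, and Vₙ = (p−1)(e₁+⋯+e_{n−1}) + p·eₙ in ℤⁿ. If S is lattice-regular, then p divides n+1. -/
/-- The vertices of the simplex `{3^{n-1}}^L_p`:
`V 0 = 0`, `V k = e_k` for `1 ≤ k ≤ n-1`, and
`V n = (p-1)(e₁ + ⋯ + e_{n-1}) + p·e_n`
(the standard basis of `ℤⁿ` being indexed by `Fin n`). -/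
def simplexVert (n p : ℕ) : Fin (n + 1) → Fin n → ℤ :=
  fun k j =>
    if (k : ℕ) = 0 then 0
    else if (k : ℕ) = n then (if (j : ℕ) = n - 1 then (p : ℤ) else (p : ℤ) - 1)
    else if (j : ℕ) = (k : ℕ) - 1 then 1 else 0

/-- The simplex with vertices `simplexVert n p` is lattice-regular: every
permutation of its vertices is realized by a lattice-affine transformation.
(For a simplex this is equivalent to transitivity on face-flags.) -/
def SimplexLatticeRegular (n p : ℕ) : Prop :=
  ∀ σ : Equiv.Perm (Fin (n + 1)),
    ∃ (A : Matrix (Fin n) (Fin n) ℤ) (b : Fin n → ℤ),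
      (A.det = 1 ∨ A.det = -1) ∧
      ∀ k, A.mulVec (simplexVert n p k) + b = simplexVert n p (σ k)

/-!
Regularity yields a lattice-affine map exchanging `V₀` and `V₁` and fixing the other vertices.
Its first coordinate is an integral affine function `x ↦ ℓ ⬝ᵥ x + c`. Its values at
`V₀, …, V_{n-1}` force `c = 1` and `ℓ j = -1` for `j < n - 1`, and then its value `p - 1` at `V_n`
reads `n + 1 = p (n - ℓ (n - 1))`, where `ℓ (n - 1)` is an integer.
-/

open Matrix

section Vertices

variable {m : ℕ} (p : ℕ)

theorem simplexVert_zero (n : ℕ) : simplexVert n p 0 = 0 := by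
  ext j
  simp [simplexVert]

theorem simplexVert_succ_castSucc (i : Fin m) :
    simplexVert (m + 1) p i.castSucc.succ = Pi.single i.castSucc 1 := by
  ext j
  simp [simplexVert, Pi.single_apply, Fin.ext_iff, i.isLt.ne]

theorem simplexVert_last_apply_castSucc (i : Fin m) :
    simplexVert (m + 1) p (Fin.last (m + 1)) i.castSucc = p - 1 := by
  simp [simplexVert, i.isLt.ne]

theorem simplexVert_last_apply_last :
    simplexVert (m + 1) p (Fin.last (m + 1)) (Fin.last m) = p := by
  simp [simplexVert]

theorem dotProduct_simplexVert_last (ℓ : Fin (m + 1) → ℤ) :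
    ℓ ⬝ᵥ simplexVert (m + 1) p (Fin.last (m + 1)) =
      (∑ i : Fin m, ℓ i.castSucc) * (p - 1) + ℓ (Fin.last m) * p := by
  simp [dotProduct, Fin.sum_univ_castSucc, simplexVert_last_apply_castSucc,
    simplexVert_last_apply_last, Finset.sum_mul]

end Vertices

def IsFirstCoordOfSwap (m p : ℕ) (ℓ : Fin (m + 2) → ℤ) (c : ℤ) : Prop :=
  ∀ k, ℓ ⬝ᵥ simplexVert (m + 2) p k + c = simplexVert (m + 2) p (Equiv.swap 0 1 k) 0

namespace IsFirstCoordOfSwap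

variable {m p : ℕ} {ℓ : Fin (m + 2) → ℤ} {c : ℤ}

theorem const_eq_one (h : IsFirstCoordOfSwap m p ℓ c) : c = 1 := by
  have h0 := h 0
  rw [Equiv.swap_apply_left, simplexVert_zero, dotProduct_zero, zero_add] at h0
  rw [h0, show (1 : Fin (m + 3)) = (0 : Fin (m + 1)).castSucc.succ from rfl,
    simplexVert_succ_castSucc]
  simp

theorem apply_castSucc (h : IsFirstCoordOfSwap m p ℓ c) (i : Fin (m + 1)) :
    ℓ i.castSucc = -1 := by
  have hi := h i.castSucc.succ
  have hrhs : simplexVert (m + 2) p (Equiv.swap 0 1 i.castSucc.succ) 0 = 0 := by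
    rcases eq_or_ne i 0 with rfl | hi0
    · rw [show (0 : Fin (m + 1)).castSucc.succ = (1 : Fin (m + 3)) from rfl,
        Equiv.swap_apply_right, simplexVert_zero, Pi.zero_apply]
    · rw [Equiv.swap_apply_of_ne_of_ne (Fin.succ_ne_zero _) ?_, simplexVert_succ_castSucc,
        Pi.single_apply, if_neg ?_]
      · exact (Fin.castSucc_ne_zero_iff.mpr hi0).symm
      · exact fun he => hi0 (Fin.castSucc_injective _ (Fin.succ_injective _ he))
  rw [hrhs, simplexVert_succ_castSucc, dotProduct_single, mul_one, const_eq_one h] at hi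
  linarith

theorem dvd (h : IsFirstCoordOfSwap m p ℓ c) : (p : ℤ) ∣ m + 3 := by
  have hfix : Equiv.swap (0 : Fin (m + 3)) 1 (Fin.last (m + 2)) = Fin.last (m + 2) :=
    Equiv.swap_apply_of_ne_of_ne (by simp [Fin.ext_iff]) (by simp [Fin.ext_iff])
  have hlast := h (Fin.last (m + 2))
  rw [hfix, dotProduct_simplexVert_last, const_eq_one h, ← Fin.castSucc_zero,
    simplexVert_last_apply_castSucc] at hlast
  simp only [apply_castSucc h, Finset.sum_const, Finset.card_univ, Fintype.card_fin] at hlast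
  exact ⟨m + 2 - ℓ (Fin.last (m + 1)), by linear_combination hlast⟩

end IsFirstCoordOfSwap

theorem simplex_regular_imp_dvd_general (n p : ℕ) (hn : 2 ≤ n)
    (hreg : SimplexLatticeRegular n p) : p ∣ n + 1 := by
  obtain ⟨m, rfl⟩ : ∃ m, n = m + 2 := ⟨n - 2, by omega⟩
  obtain ⟨A, b, -, hA⟩ := hreg (Equiv.swap 0 1)
  have h : IsFirstCoordOfSwap m p (A 0) (b 0) := fun k => congrFun (hA k) 0
  exact_mod_cast h.dvd

/-- If the simplex with vertices `0, e₁, …, e_{n-1},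
(p-1)(e₁+⋯+e_{n-1}) + p·e_n` is lattice-regular, then `p` divides `n + 1`. -/
theorem simplex_regular_imp_dvd (n p : ℕ) (hn : 2 ≤ n) (hp : 1 ≤ p)
    (hreg : SimplexLatticeRegular n p) : p ∣ n + 1 :=
  simplex_regular_imp_dvd_general n p hn hreg
end

section
/- For n ≥ 2 and p a positive divisor of n+1, the simplex with vertices V₀ = 0, Vᵢ = eᵢ for i = 1,…,n−1, and Vₙ = (p−1)(e₁+⋯+e_{n−1}) + p·eₙ in ℤⁿ is lattice-regular: its lattice-affine symmetry group acts transitively on face-flags. Equivalently, for every permutation σ of {0,1,…,n} there exists an affine map x ↦ Ax + b, A ∈ GL(n,ℤ), b ∈ ℤⁿ, with A·Vᵢ + b = V_{σ(i)} for all i. -/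
set_option maxHeartbeats 2000000

open Finset

lemma sum_indicator_val {n : ℕ} (t : ℕ) (ht : t < n) (c : ℤ) :
    ∑ j : Fin n, (if (j : ℕ) = t then c else 0) = c := by
  have h : ∀ j : Fin n, (if (j : ℕ) = t then c else 0) = if j = ⟨t, ht⟩ then c else 0 :=
    fun j => if_congr ⟨fun h => Fin.ext h, fun h => by rw [h]⟩ rfl rfl
  rw [Finset.sum_congr rfl fun j _ => h j]
  exact Fintype.sum_ite_eq' _ _

lemma sum_break1 {n : ℕ} {f : Fin n → ℤ} (t : ℕ) (a d : ℤ) (h1 : t < n)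
    (hf : ∀ j : Fin n, f j = if (j : ℕ) = t then a else d) :
    ∑ j, f j = a + ((n : ℤ) - 1) * d := by
  have key : ∀ j : Fin n, f j = d + (if (j : ℕ) = t then a - d else 0) := by
    intro j; rw [hf j]; split_ifs <;> first | ring1 | (exfalso; first | assumption | omega)
  rw [Finset.sum_congr rfl fun j _ => key j, Finset.sum_add_distrib, Finset.sum_const,
    sum_indicator_val t h1, Finset.card_univ, Fintype.card_fin, nsmul_eq_mul]
  ring

lemma sum_break2 {n : ℕ} {f : Fin n → ℤ} (t₁ t₂ : ℕ) (a b d : ℤ)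
    (h1 : t₁ < n) (h2 : t₂ < n) (h12 : t₁ ≠ t₂)
    (hf : ∀ j : Fin n, f j = if (j : ℕ) = t₁ then a else if (j : ℕ) = t₂ then b else d) :
    ∑ j, f j = a + b + ((n : ℤ) - 2) * d := by
  have key : ∀ j : Fin n, f j =
      d + ((if (j : ℕ) = t₁ then a - d else 0) + (if (j : ℕ) = t₂ then b - d else 0)) := by
    intro j; rw [hf j]; split_ifs <;> first | ring1 | (exfalso; first | assumption | omega)
  rw [Finset.sum_congr rfl fun j _ => key j, Finset.sum_add_distrib, Finset.sum_const,
    Finset.sum_add_distrib, sum_indicator_val t₁ h1, sum_indicator_val t₂ h2,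
    Finset.card_univ, Fintype.card_fin, nsmul_eq_mul]
  ring

lemma sum_break3 {n : ℕ} {f : Fin n → ℤ} (t₁ t₂ t₃ : ℕ) (a b c d : ℤ)
    (h1 : t₁ < n) (h2 : t₂ < n) (h3 : t₃ < n) (h12 : t₁ ≠ t₂) (h13 : t₁ ≠ t₃) (h23 : t₂ ≠ t₃)
    (hf : ∀ j : Fin n, f j = if (j : ℕ) = t₁ then a else if (j : ℕ) = t₂ then b
      else if (j : ℕ) = t₃ then c else d) :
    ∑ j, f j = a + b + c + ((n : ℤ) - 3) * d := by
  have key : ∀ j : Fin n, f j =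
      d + ((if (j : ℕ) = t₁ then a - d else 0) + ((if (j : ℕ) = t₂ then b - d else 0)
        + (if (j : ℕ) = t₃ then c - d else 0))) := by
    intro j; rw [hf j]; split_ifs <;> first | ring1 | (exfalso; first | assumption | omega)
  rw [Finset.sum_congr rfl fun j _ => key j, Finset.sum_add_distrib, Finset.sum_const,
    Finset.sum_add_distrib, Finset.sum_add_distrib, sum_indicator_val t₁ h1,
    sum_indicator_val t₂ h2, sum_indicator_val t₃ h3,
    Finset.card_univ, Fintype.card_fin, nsmul_eq_mul]
  ring

def M1 (n m : ℕ) : Matrix (Fin n) (Fin n) ℤ := fun i j =>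
  if (i : ℕ) = 0 then (if (j : ℕ) = n - 1 then (n : ℤ) - (m : ℤ) else -1)
  else if (j : ℕ) = (i : ℕ) then 1 else 0

def v1 (n : ℕ) : Fin n → ℤ := fun i => if (i : ℕ) = 0 then 1 else 0

def M2 (n t : ℕ) : Matrix (Fin n) (Fin n) ℤ := fun i j =>
  if (i : ℕ) = t - 1 then (if (j : ℕ) = t then 1 else 0)
  else if (i : ℕ) = t then (if (j : ℕ) = t - 1 then 1 else 0)
  else if (j : ℕ) = (i : ℕ) then 1 else 0

def M3 (n p : ℕ) : Matrix (Fin n) (Fin n) ℤ := fun i j =>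
  if (j : ℕ) + 3 ≤ n then (if (i : ℕ) = (j : ℕ) then 1 else 0)
  else if (j : ℕ) + 2 = n then (if (i : ℕ) = n - 1 then (p : ℤ) else (p : ℤ) - 1)
  else (if (i : ℕ) = n - 2 then 2 - (p : ℤ) else 1 - (p : ℤ))

lemma det_pm_one {nn : ℕ} {A : Matrix (Fin nn) (Fin nn) ℤ} (h : A * A = 1) :
    A.det = 1 ∨ A.det = -1 := by
  have h2 := congrArg Matrix.det h
  rw [Matrix.det_mul, Matrix.det_one] at h2
  exact Int.isUnit_iff.mp (IsUnit.of_mul_eq_one _ h2)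

lemma one_apply_eq_ite {nn : ℕ} (i k : Fin nn) :
    (1 : Matrix (Fin nn) (Fin nn) ℤ) i k = if (i : ℕ) = (k : ℕ) then 1 else 0 := by
  rw [Matrix.one_apply]
  exact if_congr ⟨fun h => by rw [h], fun h => Fin.ext h⟩ rfl rfl

lemma swap01_mem (n p m : ℕ) (hn : 2 ≤ n) (hp : 0 < p) (hm : n + 1 = p * m)
    (a b : Fin (n + 1)) (ha : (a : ℕ) = 0) (hb : (b : ℕ) = 1) :
    ∃ (A : Matrix (Fin n) (Fin n) ℤ) (v : Fin n → ℤ),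
      (A.det = 1 ∨ A.det = -1) ∧
      ∀ k, A.mulVec (simplexVert n p k) + v = simplexVert n p (Equiv.swap a b k) := by
  have hmz : (n : ℤ) + 1 = (p : ℤ) * (m : ℤ) := by exact_mod_cast hm
  refine ⟨M1 n m, v1 n, ?_, ?_⟩
  · right
    have htri : (M1 n m).BlockTriangular id := by
      intro i j hij
      have hji : (j : ℕ) < (i : ℕ) := hij
      simp only [M1]
      split_ifs <;> first | rfl | (exfalso; first | assumption | omega)
    rw [Matrix.det_of_upperTriangular htri]
    have hdiag : ∀ i : Fin n, M1 n m i i = if (i : ℕ) = 0 then (-1 : ℤ) else 1 := by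
      intro i; have hi := i.isLt; simp only [M1]
      split_ifs <;> first | rfl | (exfalso; first | assumption | omega)
    rw [Finset.prod_congr rfl fun i _ => hdiag i,
      Finset.prod_eq_single_of_mem (⟨0, by omega⟩ : Fin n) (Finset.mem_univ _)
        (fun c _ hc => if_neg (fun h => hc (Fin.ext h)))]
    simp
  · intro k
    funext i
    have hk := k.isLt
    have hi := i.isLt
    simp only [Matrix.mulVec, dotProduct, Pi.add_apply]
    by_cases hk0 : (k : ℕ) = 0
    · have hσ : Equiv.swap a b k = b := by
        rw [show k = a from Fin.ext (by omega), Equiv.swap_apply_left]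
      rw [hσ, sum_break1 0 0 0 (by omega)
        (fun j => by simp only [M1, simplexVert]; split_ifs <;> first | ring1 | (exfalso; first | assumption | omega))]
      simp only [simplexVert, v1, hb]
      split_ifs <;> first | ring1 | (exfalso; first | assumption | omega)
    · by_cases hk1 : (k : ℕ) = 1
      · have hσ : Equiv.swap a b k = a := by
          rw [show k = b from Fin.ext (by omega), Equiv.swap_apply_right]
        rw [hσ, sum_break1 0 (if (i : ℕ) = 0 then -1 else 0) 0 (by omega)
          (fun j => by
            have hj := j.isLt
            simp only [M1, simplexVert]
            split_ifs <;> first | ring1 | (exfalso; first | assumption | omega))]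
        simp only [simplexVert, v1, ha]
        split_ifs <;> first | ring1 | (exfalso; first | assumption | omega)
      · by_cases hkn : (k : ℕ) = n
        · have hσ : Equiv.swap a b k = k :=
            Equiv.swap_apply_of_ne_of_ne (Fin.ne_of_val_ne (by omega))
              (Fin.ne_of_val_ne (by omega))
          rw [hσ]
          by_cases hi0 : (i : ℕ) = 0
          · rw [sum_break1 (n - 1) (((n : ℤ) - (m : ℤ)) * (p : ℤ)) ((-1) * ((p : ℤ) - 1))
              (by omega)
              (fun j => by
                have hj := j.isLt
                simp only [M1, simplexVert]
                split_ifs <;> first | ring1 | (exfalso; first | assumption | omega))]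
            simp only [simplexVert, v1]
            split_ifs <;> first | ring1 | (exfalso; first | assumption | omega) | linear_combination hmz
          · rw [sum_break1 (i : ℕ) (if (i : ℕ) = n - 1 then (p : ℤ) else (p : ℤ) - 1) 0
              (by omega)
              (fun j => by
                have hj := j.isLt
                simp only [M1, simplexVert]
                split_ifs <;> first | ring1 | (exfalso; first | assumption | omega))]
            simp only [simplexVert, v1]
            split_ifs <;> first | ring1 | (exfalso; first | assumption | omega)
        · -- 2 ≤ k ≤ n - 1
          have hσ : Equiv.swap a b k = k :=
            Equiv.swap_apply_of_ne_of_ne (Fin.ne_of_val_ne (by omega))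
              (Fin.ne_of_val_ne (by omega))
          rw [hσ, sum_break1 ((k : ℕ) - 1)
            (if (i : ℕ) = 0 then (if (k : ℕ) - 1 = n - 1 then (n : ℤ) - (m : ℤ) else -1)
              else (if (k : ℕ) - 1 = (i : ℕ) then 1 else 0)) 0 (by omega)
            (fun j => by
              have hj := j.isLt
              simp only [M1, simplexVert]
              split_ifs <;> first | ring1 | (exfalso; first | assumption | omega))]
          simp only [simplexVert, v1]
          split_ifs <;> first | ring1 | (exfalso; first | assumption | omega)

lemma swapMid_mem (n p : ℕ) (hn : 2 ≤ n) (hp : 0 < p)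
    (a b : Fin (n + 1)) (t : ℕ) (ha : (a : ℕ) = t) (hb : (b : ℕ) = t + 1)
    (ht1 : 1 ≤ t) (ht2 : t + 1 ≤ n - 1) :
    ∃ (A : Matrix (Fin n) (Fin n) ℤ) (v : Fin n → ℤ),
      (A.det = 1 ∨ A.det = -1) ∧
      ∀ k, A.mulVec (simplexVert n p k) + v = simplexVert n p (Equiv.swap a b k) := by
  refine ⟨M2 n t, 0, ?_, ?_⟩
  · refine det_pm_one ?_
    ext i k
    have hi := i.isLt
    have hk := k.isLt
    rw [Matrix.mul_apply, one_apply_eq_ite]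
    by_cases hi1 : (i : ℕ) = t - 1
    · rw [sum_break1 t (if (k : ℕ) = t - 1 then 1 else 0) 0 (by omega)
        (fun j => by
          have hj := j.isLt
          simp only [M2]
          split_ifs <;> first | ring1 | (exfalso; first | assumption | omega))]
      split_ifs <;> first | ring1 | (exfalso; first | assumption | omega)
    · by_cases hi2 : (i : ℕ) = t
      · rw [sum_break1 (t - 1) (if (k : ℕ) = t then 1 else 0) 0 (by omega)
          (fun j => by
            have hj := j.isLt
            simp only [M2]
            split_ifs <;> first | ring1 | (exfalso; first | assumption | omega))]
        split_ifs <;> first | ring1 | (exfalso; first | assumption | omega)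
      · rw [sum_break1 (i : ℕ) (if (k : ℕ) = (i : ℕ) then 1 else 0) 0 (by omega)
          (fun j => by
            have hj := j.isLt
            simp only [M2]
            split_ifs <;> first | ring1 | (exfalso; first | assumption | omega))]
        split_ifs <;> first | ring1 | (exfalso; first | assumption | omega)
  · intro k
    funext i
    have hk := k.isLt
    have hi := i.isLt
    simp only [Matrix.mulVec, dotProduct, Pi.add_apply, Pi.zero_apply]
    by_cases hk0 : (k : ℕ) = 0
    · have hσ : Equiv.swap a b k = k :=
        Equiv.swap_apply_of_ne_of_ne (Fin.ne_of_val_ne (by omega))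
          (Fin.ne_of_val_ne (by omega))
      rw [hσ, sum_break1 0 0 0 (by omega)
        (fun j => by
          have hj := j.isLt
          simp only [M2, simplexVert]
          split_ifs <;> first | ring1 | (exfalso; first | assumption | omega))]
      simp only [simplexVert]
      split_ifs <;> first | ring1 | (exfalso; first | assumption | omega)
    · by_cases hkt : (k : ℕ) = t
      · have hσ : Equiv.swap a b k = b := by
          rw [show k = a from Fin.ext (by omega), Equiv.swap_apply_left]
        rw [hσ, sum_break1 (t - 1) (if (i : ℕ) = t then 1 else 0) 0 (by omega)
          (fun j => by
            have hj := j.isLt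
            simp only [M2, simplexVert]
            split_ifs <;> first | ring1 | (exfalso; first | assumption | omega))]
        simp only [simplexVert, hb]
        split_ifs <;> first | ring1 | (exfalso; first | assumption | omega)
      · by_cases hkt1 : (k : ℕ) = t + 1
        · have hσ : Equiv.swap a b k = a := by
            rw [show k = b from Fin.ext (by omega), Equiv.swap_apply_right]
          rw [hσ, sum_break1 t (if (i : ℕ) = t - 1 then 1 else 0) 0 (by omega)
            (fun j => by
              have hj := j.isLt
              simp only [M2, simplexVert]
              split_ifs <;> first | ring1 | (exfalso; first | assumption | omega))]
          simp only [simplexVert, ha]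
          split_ifs <;> first | ring1 | (exfalso; first | assumption | omega)
        · have hσ : Equiv.swap a b k = k :=
            Equiv.swap_apply_of_ne_of_ne (Fin.ne_of_val_ne (by omega))
              (Fin.ne_of_val_ne (by omega))
          rw [hσ]
          by_cases hkn : (k : ℕ) = n
          · by_cases hi1 : (i : ℕ) = t - 1
            · rw [sum_break1 t (if t = n - 1 then (p : ℤ) else (p : ℤ) - 1) 0 (by omega)
                (fun j => by
                  have hj := j.isLt
                  simp only [M2, simplexVert]
                  split_ifs <;> first | ring1 | (exfalso; first | assumption | omega))]
              simp only [simplexVert]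
              split_ifs <;> first | ring1 | (exfalso; first | assumption | omega)
            · by_cases hi2 : (i : ℕ) = t
              · rw [sum_break1 (t - 1) (if t - 1 = n - 1 then (p : ℤ) else (p : ℤ) - 1) 0
                  (by omega)
                  (fun j => by
                    have hj := j.isLt
                    simp only [M2, simplexVert]
                    split_ifs <;> first | ring1 | (exfalso; first | assumption | omega))]
                simp only [simplexVert]
                split_ifs <;> first | ring1 | (exfalso; first | assumption | omega)
              · rw [sum_break1 (i : ℕ) (if (i : ℕ) = n - 1 then (p : ℤ) else (p : ℤ) - 1) 0
                  (by omega)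
                  (fun j => by
                    have hj := j.isLt
                    simp only [M2, simplexVert]
                    split_ifs <;> first | ring1 | (exfalso; first | assumption | omega))]
                simp only [simplexVert]
                split_ifs <;> first | ring1 | (exfalso; first | assumption | omega)
          · -- middle k, k ∉ {0, t, t+1, n}
            rw [sum_break1 ((k : ℕ) - 1)
              (if (i : ℕ) = t - 1 then (if (k : ℕ) - 1 = t then 1 else 0)
                else if (i : ℕ) = t then (if (k : ℕ) - 1 = t - 1 then 1 else 0)
                else (if (k : ℕ) - 1 = (i : ℕ) then 1 else 0)) 0 (by omega)
              (fun j => by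
                have hj := j.isLt
                simp only [M2, simplexVert]
                split_ifs <;> first | ring1 | (exfalso; first | assumption | omega))]
            simp only [simplexVert]
            split_ifs <;> first | ring1 | (exfalso; first | assumption | omega)

lemma swapLast_mem (n p : ℕ) (hn : 2 ≤ n) (hp : 0 < p)
    (a b : Fin (n + 1)) (ha : (a : ℕ) = n - 1) (hb : (b : ℕ) = n) :
    ∃ (A : Matrix (Fin n) (Fin n) ℤ) (v : Fin n → ℤ),
      (A.det = 1 ∨ A.det = -1) ∧
      ∀ k, A.mulVec (simplexVert n p k) + v = simplexVert n p (Equiv.swap a b k) := by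
  -- the "apply M3 to the dense-ish column" computations, used twice below
  have colsum : ∀ (i : Fin n) (w : Fin n → ℤ),
      (∀ j : Fin n, w j = if (j : ℕ) = n - 1 then (p : ℤ) else (p : ℤ) - 1) →
      ∑ j, M3 n p i j * w j = if (i : ℕ) = n - 2 then 1 else 0 := by
    intro i w hw
    have hi := i.isLt
    by_cases hi3 : (i : ℕ) + 3 ≤ n
    · rw [sum_break3 (i : ℕ) (n - 2) (n - 1) ((p : ℤ) - 1) (((p : ℤ) - 1) * ((p : ℤ) - 1))
        ((1 - (p : ℤ)) * (p : ℤ)) 0 (by omega) (by omega) (by omega) (by omega) (by omega)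
        (by omega)
        (fun j => by
          have hj := j.isLt
          rw [hw j]
          simp only [M3]
          split_ifs <;> first | ring1 | (exfalso; first | assumption | omega))]
      rw [if_neg (by omega)]; ring
    · by_cases hi2 : (i : ℕ) + 2 = n
      · rw [sum_break2 (n - 2) (n - 1) (((p : ℤ) - 1) * ((p : ℤ) - 1)) ((2 - (p : ℤ)) * (p : ℤ))
          0 (by omega) (by omega) (by omega)
          (fun j => by
            have hj := j.isLt
            rw [hw j]
            simp only [M3]
            split_ifs <;> first | ring1 | (exfalso; first | assumption | omega))]
        rw [if_pos (by omega)]; ring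
      · rw [sum_break2 (n - 2) (n - 1) ((p : ℤ) * ((p : ℤ) - 1)) ((1 - (p : ℤ)) * (p : ℤ))
          0 (by omega) (by omega) (by omega)
          (fun j => by
            have hj := j.isLt
            rw [hw j]
            simp only [M3]
            split_ifs <;> first | ring1 | (exfalso; first | assumption | omega))]
        rw [if_neg (by omega)]; ring
  refine ⟨M3 n p, 0, ?_, ?_⟩
  · refine det_pm_one ?_
    ext i k
    have hi := i.isLt
    have hk := k.isLt
    rw [Matrix.mul_apply, one_apply_eq_ite]
    by_cases hk3 : (k : ℕ) + 3 ≤ n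
    · rw [sum_break1 (k : ℕ) (if (i : ℕ) = (k : ℕ) then 1 else 0) 0 (by omega)
        (fun j => by
          have hj := j.isLt
          simp only [M3]
          split_ifs <;> first | ring1 | (exfalso; first | assumption | omega))]
      split_ifs <;> first | ring1 | (exfalso; first | assumption | omega)
    · by_cases hk2 : (k : ℕ) + 2 = n
      · rw [colsum i (fun j => M3 n p j k)
          (fun j => by
            have hj := j.isLt
            simp only [M3]
            split_ifs <;> first | ring1 | (exfalso; first | assumption | omega))]
        split_ifs <;> first | ring1 | (exfalso; first | assumption | omega)
      · -- k = n - 1 : last column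
        by_cases hi3 : (i : ℕ) + 3 ≤ n
        · rw [sum_break3 (i : ℕ) (n - 2) (n - 1) (1 - (p : ℤ))
            (((p : ℤ) - 1) * (2 - (p : ℤ))) ((1 - (p : ℤ)) * (1 - (p : ℤ))) 0
            (by omega) (by omega) (by omega) (by omega) (by omega) (by omega)
            (fun j => by
              have hj := j.isLt
              simp only [M3]
              split_ifs <;> first | ring1 | (exfalso; first | assumption | omega))]
          split_ifs <;> first | ring1 | (exfalso; first | assumption | omega)
        · by_cases hi2 : (i : ℕ) + 2 = n
          · rw [sum_break2 (n - 2) (n - 1) (((p : ℤ) - 1) * (2 - (p : ℤ)))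
              ((2 - (p : ℤ)) * (1 - (p : ℤ))) 0 (by omega) (by omega) (by omega)
              (fun j => by
                have hj := j.isLt
                simp only [M3]
                split_ifs <;> first | ring1 | (exfalso; first | assumption | omega))]
            split_ifs <;> first | ring1 | (exfalso; first | assumption | omega)
          · rw [sum_break2 (n - 2) (n - 1) ((p : ℤ) * (2 - (p : ℤ)))
              ((1 - (p : ℤ)) * (1 - (p : ℤ))) 0 (by omega) (by omega) (by omega)
              (fun j => by
                have hj := j.isLt
                simp only [M3]
                split_ifs <;> first | ring1 | (exfalso; first | assumption | omega))]
            split_ifs <;> first | ring1 | (exfalso; first | assumption | omega)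
  · intro k
    funext i
    have hk := k.isLt
    have hi := i.isLt
    simp only [Matrix.mulVec, dotProduct, Pi.add_apply, Pi.zero_apply]
    by_cases hk0 : (k : ℕ) = 0
    · have hσ : Equiv.swap a b k = k :=
        Equiv.swap_apply_of_ne_of_ne (Fin.ne_of_val_ne (by omega))
          (Fin.ne_of_val_ne (by omega))
      rw [hσ, sum_break1 0 0 0 (by omega)
        (fun j => by
          have hj := j.isLt
          simp only [M3, simplexVert]
          split_ifs <;> first | ring1 | (exfalso; first | assumption | omega))]
      simp only [simplexVert]
      split_ifs <;> first | ring1 | (exfalso; first | assumption | omega)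
    · by_cases hkn1 : (k : ℕ) = n - 1
      · have hσ : Equiv.swap a b k = b := by
          rw [show k = a from Fin.ext (by omega), Equiv.swap_apply_left]
        rw [hσ, sum_break1 (n - 2) (if (i : ℕ) = n - 1 then (p : ℤ) else (p : ℤ) - 1) 0
          (by omega)
          (fun j => by
            have hj := j.isLt
            simp only [M3, simplexVert]
            split_ifs <;> first | ring1 | (exfalso; first | assumption | omega))]
        simp only [simplexVert, hb]
        split_ifs <;> first | ring1 | (exfalso; first | assumption | omega)
      · by_cases hkn : (k : ℕ) = n
        · have hσ : Equiv.swap a b k = a := by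
            rw [show k = b from Fin.ext (by omega), Equiv.swap_apply_right]
          rw [hσ, colsum i (fun j => simplexVert n p k j)
            (fun j => by
              have hj := j.isLt
              simp only [simplexVert]
              split_ifs <;> first | ring1 | (exfalso; first | assumption | omega))]
          simp only [simplexVert, ha]
          split_ifs <;> first | ring1 | (exfalso; first | assumption | omega)
        · -- 1 ≤ k ≤ n - 2
          have hσ : Equiv.swap a b k = k :=
            Equiv.swap_apply_of_ne_of_ne (Fin.ne_of_val_ne (by omega))
              (Fin.ne_of_val_ne (by omega))
          rw [hσ, sum_break1 ((k : ℕ) - 1) (if (i : ℕ) = (k : ℕ) - 1 then 1 else 0) 0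
            (by omega)
            (fun j => by
              have hj := j.isLt
              simp only [M3, simplexVert]
              split_ifs <;> first | ring1 | (exfalso; first | assumption | omega))]
          simp only [simplexVert]
          split_ifs <;> first | ring1 | (exfalso; first | assumption | omega)

/-- If `p` is a positive divisor of `n + 1`, then the simplex with vertices
`0, e₁, …, e_{n-1}, (p-1)(e₁+⋯+e_{n-1}) + p·e_n` is lattice-regular: every
permutation of its vertices is realized by a lattice-affine transformation. -/
theorem simplex_dvd_imp_regular (n p : ℕ) (hn : 2 ≤ n) (hp : 0 < p)
    (hdvd : p ∣ n + 1) : SimplexLatticeRegular n p := by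
  obtain ⟨m, hm⟩ := hdvd
  let S : Submonoid (Equiv.Perm (Fin (n + 1))) :=
    { carrier := {σ | ∃ (A : Matrix (Fin n) (Fin n) ℤ) (b : Fin n → ℤ),
        (A.det = 1 ∨ A.det = -1) ∧
        ∀ k, A.mulVec (simplexVert n p k) + b = simplexVert n p (σ k)}
      one_mem' := ⟨1, 0, Or.inl Matrix.det_one, fun k => by
        simp [Matrix.one_mulVec]⟩
      mul_mem' := by
        rintro x y ⟨A, u, hA, hxA⟩ ⟨B, v, hB, hyB⟩
        refine ⟨A * B, A.mulVec v + u, ?_, fun k => ?_⟩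
        · rcases hA with h | h <;> rcases hB with h' | h' <;>
            simp [Matrix.det_mul, h, h']
        · have h1 := hxA (y k)
          have h2 := hyB k
          rw [Equiv.Perm.mul_apply, ← h1, ← h2, Matrix.mulVec_add,
            ← Matrix.mulVec_mulVec]
          abel }
  suffices hS : ∀ τ, τ ∈ S from fun σ => hS σ
  have hgen : ∀ i : Fin n, Equiv.swap (Fin.castSucc i) (Fin.succ i) ∈ S := by
    intro i
    have hi := i.isLt
    by_cases h0 : (i : ℕ) = 0
    · exact swap01_mem n p m hn hp hm _ _ (by simp [h0]) (by simp [h0])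
    · by_cases hl : (i : ℕ) = n - 1
      · exact swapLast_mem n p hn hp _ _ (by simp [hl]) (by simp [hl]; omega)
      · exact swapMid_mem n p hn hp _ _ (i : ℕ) (by simp) (by simp) (by omega) (by omega)
  intro τ
  have htop := Equiv.Perm.mclosure_swap_castSucc_succ n
  have hτ : τ ∈ Submonoid.closure (Set.range fun i : Fin n => Equiv.swap i.castSucc i.succ) := by
    rw [htop]; exact Submonoid.mem_top τ
  exact Submonoid.closure_le.mpr (by rintro _ ⟨i, rfl⟩; exact hgen i) hτ
end

section
/- For n ≥ 2, the cube in ℤⁿ generated by the origin and the vectors e₁, …, e_{n−1}, and e₁+e₂+⋯+e_{n−1}+2eₙ is lattice-regular: every hyperoctahedral symmetry of the cube (as an abstract polytope) is realized by an affine map x ↦ Ax + b with A ∈ GL(n,ℤ), b ∈ ℤⁿ. -/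
def cubeVert (n : ℕ) (v : Fin n → Fin n → ℤ) (s : Fin n → Bool) : Fin n → ℤ :=
  ∑ i : Fin n, if s i then v i else 0

def cube2Gen (n : ℕ) : Fin n → Fin n → ℤ :=
  fun i j =>
    if (i : ℕ) = n - 1 then (if (j : ℕ) = n - 1 then 2 else 1)
    else if j = i then 1 else 0

/-- The cube generated by the origin and the vectors
`e₁, …, e_{n-1}, e₁ + ⋯ + e_{n-1} + 2eₙ` is lattice-regular: every
hyperoctahedral symmetry of the abstract cube (a signed permutation `(σ, ε)`
of the generating directions, acting on the vertex labels `s : Fin n → Bool`)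
is realized by a lattice-affine transformation. -/
theorem cube2_lattice_regular (n : ℕ) (hn : 2 ≤ n)
    (σ : Equiv.Perm (Fin n)) (ε : Fin n → Bool) :
    ∃ (A : Matrix (Fin n) (Fin n) ℤ) (b : Fin n → ℤ),
      (A.det = 1 ∨ A.det = -1) ∧
      ∀ s : Fin n → Bool,
        A.mulVec (cubeVert n (cube2Gen n) s) + b =
          cubeVert n (cube2Gen n) (fun i => xor (ε i) (s (σ i))) := by
  have hL : n - 1 < n := by omega
  set L : Fin n := ⟨n - 1, hL⟩ with hLdef
  have hvdef : ∀ i k : Fin n, cube2Gen n i k =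
      if i = L then (if k = L then 2 else 1) else (if k = i then 1 else 0) := by
    intro i k
    have h1 : ((i : ℕ) = n - 1) ↔ i = L := by
      simp [hLdef, Fin.ext_iff]
    have h2 : ((k : ℕ) = n - 1) ↔ k = L := by
      simp [hLdef, Fin.ext_iff]
    simp only [cube2Gen, h1, h2]
  set d : Fin n → ℤ := fun k => if ε k then -1 else 1 with hd
  set τ : Equiv.Perm (Fin n) := σ.symm with hτ
  set H : Fin n → ℤ := fun k => if k = L then d L else if ε k = ε L then d k else 0 with hH
  set A : Matrix (Fin n) (Fin n) ℤ := Matrix.of fun k j =>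
    if j = L then d (τ L) * cube2Gen n (τ L) k - H k
    else d (τ j) * cube2Gen n (τ j) k with hAdef
  have hAne : ∀ k j, j ≠ L → A k j = d (τ j) * cube2Gen n (τ j) k := by
    intro k j hj; simp [hAdef, hj]
  have hAL : ∀ k, A k L = d (τ L) * cube2Gen n (τ L) k - H k := by
    intro k; simp [hAdef]
  -- key sum lemma
  have hS : ∀ k : Fin n, ∑ i : Fin n, d i * cube2Gen n i k = 2 * H k := by
    intro k
    rw [← Finset.add_sum_erase Finset.univ _ (Finset.mem_univ L)]
    have h2 : ∑ i ∈ Finset.univ.erase L, d i * cube2Gen n i k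
        = ∑ i ∈ Finset.univ.erase L, (if i = k then d k else 0) := by
      refine Finset.sum_congr rfl fun i hi => ?_
      rw [Finset.mem_erase] at hi
      rw [hvdef]
      by_cases hik : i = k
      · subst hik; simp [hi.1]
      · simp [hi.1, hik, Ne.symm hik]
    rw [h2, Finset.sum_ite_eq' (Finset.univ.erase L) k (fun _ => d k)]
    rw [hvdef]
    by_cases hk : k = L
    · subst hk; simp [hH]; ring
    · have hk' : k ∈ Finset.univ.erase L := Finset.mem_erase.mpr ⟨hk, Finset.mem_univ k⟩
      simp only [hk', if_pos, hH, hk, if_neg, if_false]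
      by_cases he : ε k = ε L
      · simp [he, hd]
        cases h : ε L <;> simp [hd, he, h, if_true] <;> ring
      · simp [he, hd]
        cases h1 : ε k <;> cases h2 : ε L <;> simp [h1, h2] at he ⊢ <;> ring
  -- A maps generator j to d (τ j) • generator (τ j)
  have hAv : ∀ j k : Fin n, A.mulVec (cube2Gen n j) k = d (τ j) * cube2Gen n (τ j) k := by
    intro j k
    by_cases hj : j = L
    · subst hj
      have e1 : A.mulVec (cube2Gen n L) k = (∑ m : Fin n, A k m) + A k L := by
        simp only [Matrix.mulVec, dotProduct]
        have : ∀ m : Fin n, A k m * cube2Gen n L m = A k m + (if m = L then A k m else 0) := by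
          intro m; rw [hvdef]
          by_cases hm : m = L <;> simp [hm] <;> ring
        rw [Finset.sum_congr rfl fun m _ => this m, Finset.sum_add_distrib,
          Finset.sum_ite_eq' Finset.univ L (fun m => A k m)]
        simp
      have e2 : (∑ m : Fin n, A k m)
          = A k L + (2 * H k - d (τ L) * cube2Gen n (τ L) k) := by
        rw [← Finset.add_sum_erase Finset.univ _ (Finset.mem_univ L)]
        congr 1
        have h3 : ∑ m ∈ Finset.univ.erase L, A k m
            = ∑ m ∈ Finset.univ.erase L, d (τ m) * cube2Gen n (τ m) k := by
          refine Finset.sum_congr rfl fun m hm => ?_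
          exact hAne k m (Finset.mem_erase.mp hm).1
        rw [h3]
        have h4 : ∑ m : Fin n, d (τ m) * cube2Gen n (τ m) k
            = ∑ i : Fin n, d i * cube2Gen n i k :=
          Equiv.sum_comp τ (fun i => d i * cube2Gen n i k)
        have h5 := Finset.add_sum_erase Finset.univ
          (fun m => d (τ m) * cube2Gen n (τ m) k) (Finset.mem_univ L)
        beta_reduce at h5
        rw [h4, hS k] at h5
        linarith
      rw [e1, e2, hAL k]; ring
    · have e1 : A.mulVec (cube2Gen n j) k = A k j := by
        simp only [Matrix.mulVec, dotProduct]
        have : ∀ m : Fin n, A k m * cube2Gen n j m = (if m = j then A k m else 0) := by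
          intro m; rw [hvdef]
          by_cases hm : m = j <;> simp [hm, hj]
        rw [Finset.sum_congr rfl fun m _ => this m,
          Finset.sum_ite_eq' Finset.univ j (fun m => A k m)]
        simp
      rw [e1, hAne k j hj]
  -- determinant
  set M : Matrix (Fin n) (Fin n) ℤ := Matrix.of fun k j => cube2Gen n j k with hMdef
  have hMdet : M.det = 2 := by
    have htri : M.BlockTriangular id := by
      intro i j hij
      have hji : (j : ℕ) < (i : ℕ) := hij
      have hjL : j ≠ L := by
        intro h; rw [h] at hji; simp [hLdef] at hji; omega
      have hij' : i ≠ j := by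
        intro h; rw [h] at hji; omega
      simp only [hMdef, Matrix.of_apply]
      rw [hvdef]
      simp [hjL, hij']
    rw [Matrix.det_of_upperTriangular htri]
    have hdiag : ∀ k : Fin n, M k k = if k = L then 2 else 1 := by
      intro k
      simp only [hMdef, Matrix.of_apply]
      rw [hvdef]
      by_cases hk : k = L <;> simp [hk]
    rw [Finset.prod_congr rfl fun k _ => hdiag k,
      Finset.prod_ite_eq' Finset.univ L (fun _ => (2 : ℤ))]
    simp
  set Q : Matrix (Fin n) (Fin n) ℤ :=
    Matrix.diagonal d * Equiv.Perm.permMatrix ℤ σ with hQdef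
  have hQapp : ∀ m j, Q m j = if m = τ j then d (τ j) else 0 := by
    intro m j
    simp only [hQdef, Matrix.diagonal_mul, Equiv.Perm.permMatrix,
      PEquiv.toMatrix_apply, Equiv.toPEquiv_apply, Option.mem_def, Option.some.injEq]
    by_cases hm : m = τ j
    · subst hm; simp [hτ]
    · have hσ : ¬ (σ m = j) := by
        intro h; apply hm; rw [← h]; simp [hτ]
      simp [hσ, hm]
  have hAM : A * M = M * Q := by
    ext k j
    have h1 : (A * M) k j = A.mulVec (cube2Gen n j) k := by
      simp [Matrix.mul_apply, Matrix.mulVec, dotProduct, hMdef]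
    have h2 : (M * Q) k j = d (τ j) * cube2Gen n (τ j) k := by
      rw [Matrix.mul_apply]
      have : ∀ m : Fin n, M k m * Q m j
          = (if m = τ j then cube2Gen n (τ j) k * d (τ j) else 0) := by
        intro m
        rw [hQapp]
        by_cases hm : m = τ j
        · subst hm; simp [hMdef]
        · simp [hm]
      rw [Finset.sum_congr rfl fun m _ => this m,
        Finset.sum_ite_eq' Finset.univ (τ j) (fun _ => cube2Gen n (τ j) k * d (τ j))]
      simp [mul_comm]
    rw [h1, h2, hAv]
  have hQunit : IsUnit Q.det := by
    rw [hQdef, Matrix.det_mul, Matrix.det_diagonal, Matrix.det_permutation]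
    apply IsUnit.mul
    · have hone : (∏ i : Fin n, d i) * (∏ i : Fin n, d i) = 1 := by
        rw [← Finset.prod_mul_distrib]
        refine Finset.prod_eq_one fun i _ => ?_
        simp only [hd]
        by_cases h : ε i <;> simp [h]
      exact IsUnit.of_mul_eq_one _ hone
    · exact (Equiv.Perm.sign σ).isUnit
  have hdetAQ : A.det = Q.det := by
    have h := congrArg Matrix.det hAM
    rw [Matrix.det_mul, Matrix.det_mul, hMdet] at h
    omega
  refine ⟨A, cubeVert n (cube2Gen n) ε, ?_, ?_⟩
  · rw [hdetAQ] at *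
    exact Int.isUnit_iff.mp hQunit
  · intro s
    funext k
    have hmv : A.mulVec (cubeVert n (cube2Gen n) s) k
        = ∑ i : Fin n, (if s (σ i) then d i * cube2Gen n i k else 0) := by
      have h0 : A.mulVec (cubeVert n (cube2Gen n) s)
          = ∑ j : Fin n, A.mulVec (if s j then cube2Gen n j else 0) := by
        unfold cubeVert
        rw [← Matrix.mulVecLin_apply, map_sum]
        simp [Matrix.mulVecLin_apply]
      rw [h0, Finset.sum_apply]
      have h1 : ∀ j : Fin n, A.mulVec (if s j then cube2Gen n j else 0) k
          = (if s j then d (τ j) * cube2Gen n (τ j) k else 0) := by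
        intro j
        by_cases hs : s j <;> simp [hs, hAv]
      rw [Finset.sum_congr rfl fun j _ => h1 j]
      rw [← Equiv.sum_comp σ (fun j => if s j then d (τ j) * cube2Gen n (τ j) k else 0)]
      refine Finset.sum_congr rfl fun i _ => ?_
      simp [hτ]
    simp only [Pi.add_apply]
    rw [hmv]
    unfold cubeVert
    rw [Finset.sum_apply, Finset.sum_apply, ← Finset.sum_add_distrib]
    refine Finset.sum_congr rfl fun i _ => ?_
    cases he : ε i <;> cases hs2 : s (σ i) <;>
      simp [he, hs2, hd] <;> ring
end

section
/- For n ≥ 2, the cube in ℤⁿ generated by the origin and the vectors e₁, and e₁ + 2eᵢ for i = 2,…,n, is lattice-regular: the generating symmetries (transposition of any two adjacent generating vectors, and the map sending v₁ to −v₁ composed with translation by v₁) are realized by matrices in GL(n,ℤ). -/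
/-- The generating vectors `e₁` and `e₁ + 2eᵢ` (`i = 2, …, n`) of the cube
`{4,3^{n-2}}^L_3`. -/
def cube3Gen (n : ℕ) : Fin n → Fin n → ℤ :=
  fun i j =>
    if (i : ℕ) = 0 then (if (j : ℕ) = 0 then 1 else 0)
    else if (j : ℕ) = 0 then 1
    else if j = i then 2 else 0

/-!
Label the vertex `∑ sᵢ vᵢ` of the cube by `s ∈ {0,1}ⁿ`. The symmetry `s ↦ ε xor (s ∘ σ)` is
realized by the linear map `A` with `A v_{σ j} = ± v_j` (sign `-` exactly where `ε j`),
followed by translation by the vertex labelled `ε`. Since `e₀ = v₀` and `eᵢ = (vᵢ - v₀)/2`,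
`A` is integral because all the `vᵢ`, hence all the `± vᵢ`, are congruent modulo `2`.
Writing `V` for the matrix with rows `vᵢ`, the identity `V_σ Aᵀ = diag(±1) V` gives
`sign σ · det A = ±1`.
-/

open Matrix Finset Equiv

lemma Bool.toInt_xor (a b : Bool) :
    (xor a b).toInt = a.toInt + (if a then -1 else 1) * b.toInt := by
  cases a <;> cases b <;> rfl

lemma cubeVert_eq_sum (n : ℕ) (v : Fin n → Fin n → ℤ) (s : Fin n → Bool) :
    cubeVert n v s = ∑ i, (s i).toInt • v i := by
  refine sum_congr rfl fun i _ => ?_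
  cases s i <;> simp [Bool.toInt]

theorem mulVec_cubeVert_add_cubeVert {n : ℕ} (v : Fin n → Fin n → ℤ) (σ : Perm (Fin n))
    (ε : Fin n → Bool) (A : Matrix (Fin n) (Fin n) ℤ)
    (hA : ∀ j, A *ᵥ v (σ j) = (if ε j then -1 else 1) • v j) (s : Fin n → Bool) :
    A *ᵥ cubeVert n v s + cubeVert n v ε = cubeVert n v (fun i => xor (ε i) (s (σ i))) := by
  simp only [cubeVert_eq_sum, mulVec_sum, mulVec_smul]
  rw [← Equiv.sum_comp σ, ← sum_add_distrib]
  refine sum_congr rfl fun j _ => ?_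
  rw [hA, Bool.toInt_xor, smul_smul, ← add_smul]
  congr 1
  ring

theorem isUnit_det_of_mulVec_comp_eq_smul {R ι : Type*} [CommRing R] [IsDomain R] [Fintype ι]
    [DecidableEq ι] (v : ι → ι → R) (hv : (of v).det ≠ 0) (σ : Perm ι) (d : ι → R)
    (hd : ∀ j, IsUnit (d j)) (A : Matrix ι ι R) (hA : ∀ j, A *ᵥ v (σ j) = d j • v j) :
    IsUnit A.det := by
  have hmul : (of v).submatrix σ id * Aᵀ = diagonal d * of v := by
    ext j m
    rw [diagonal_mul]
    simpa [mul_apply, mulVec, dotProduct, mul_comm] using congrFun (hA j) m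
  have hdet := congrArg det hmul
  rw [det_mul, det_permute, det_transpose, det_mul, det_diagonal] at hdet
  have hsign : ((Perm.sign σ : ℤ) : R) * A.det = ∏ j, d j :=
    mul_right_cancel₀ hv (by linear_combination hdet)
  exact isUnit_of_mul_isUnit_right (hsign ▸ IsUnit.prod_univ_iff.mpr hd)

section
variable {n : ℕ} [NeZero n]

lemma cube3Gen_apply (a k : Fin n) :
    cube3Gen n a k = if k = 0 then 1 else if k = a then 2 else 0 := by
  by_cases ha : a = 0 <;> by_cases hk : k = 0 <;>
    simp_all [cube3Gen, Fin.val_eq_zero_iff, eq_comm]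

lemma det_cube3Gen_ne_zero : (of (cube3Gen n)).det ≠ 0 := by
  have hlower : (of (cube3Gen n)).IsLowerTriangular := fun a k hak => by
    have hak : a < k := hak
    simp [cube3Gen_apply, hak.ne', (Fin.zero_le a |>.trans_lt hak).ne']
  rw [det_of_isLowerTriangular _ hlower, prod_ne_zero_iff]
  intro a _
  by_cases ha : a = 0 <;> simp [cube3Gen_apply, ha]

lemma cube3Gen_modEq (a b k : Fin n) : cube3Gen n a k ≡ cube3Gen n b k [ZMOD 2] := by
  simp only [cube3Gen_apply]
  split_ifs <;> decide

theorem exists_mulVec_cube3Gen_eq (w : Fin n → Fin n → ℤ)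
    (hw : ∀ a k, w a k ≡ w 0 k [ZMOD 2]) :
    ∃ A : Matrix (Fin n) (Fin n) ℤ, ∀ a, A *ᵥ cube3Gen n a = w a := by
  -- `ℤ`-division is exact here by `hw`.
  refine ⟨of fun k i => if i = 0 then w 0 k else (w i k - w 0 k) / 2, fun a => ?_⟩
  have hgen : cube3Gen n a = Pi.single 0 1 + if a = 0 then 0 else Pi.single a 2 := by
    ext k
    by_cases hk : k = 0 <;> by_cases ha : a = 0 <;> simp_all [cube3Gen_apply, Pi.single_apply]
  ext k
  rw [hgen]
  split_ifs with ha
  · subst ha; simp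
  · simp [mulVec_add, mulVec_single, ha, Int.ediv_mul_cancel (hw a k).symm.dvd]

theorem exists_mulVec_cube3Gen_comp_eq (σ : Perm (Fin n)) (ε : Fin n → Bool) :
    ∃ A : Matrix (Fin n) (Fin n) ℤ,
      ∀ j, A *ᵥ cube3Gen n (σ j) = (if ε j then -1 else 1) • cube3Gen n j := by
  have hsign (b : Bool) (x : ℤ) : (if b then -1 else 1) * x ≡ x [ZMOD 2] := by
    cases b
    · simp
    · exact Int.modEq_iff_dvd.mpr ⟨x, by simp only [if_true]; ring⟩
  obtain ⟨A, hA⟩ := exists_mulVec_cube3Gen_eq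
    (fun a => (if ε (σ.symm a) then -1 else 1) • cube3Gen n (σ.symm a)) fun a k =>
      ((hsign _ _).trans (cube3Gen_modEq _ _ k)).trans (hsign _ _).symm
  exact ⟨A, fun j => by simpa using hA (σ j)⟩

end

theorem cube3_lattice_regular_general (n : ℕ)
    (σ : Equiv.Perm (Fin n)) (ε : Fin n → Bool) :
    ∃ (A : Matrix (Fin n) (Fin n) ℤ) (b : Fin n → ℤ),
      (A.det = 1 ∨ A.det = -1) ∧
      ∀ s : Fin n → Bool,
        A.mulVec (cubeVert n (cube3Gen n) s) + b =
          cubeVert n (cube3Gen n) (fun i => xor (ε i) (s (σ i))) := by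
  obtain rfl | hn := n.eq_zero_or_pos
  · exact ⟨1, 0, by simp, fun _ => Subsingleton.elim _ _⟩
  have : NeZero n := ⟨hn.ne'⟩
  obtain ⟨A, hA⟩ := exists_mulVec_cube3Gen_comp_eq σ ε
  refine ⟨A, cubeVert n (cube3Gen n) ε, Int.isUnit_iff.mp ?_,
    mulVec_cubeVert_add_cubeVert _ σ ε A hA⟩
  exact isUnit_det_of_mulVec_comp_eq_smul _ det_cube3Gen_ne_zero σ _
    (fun j => by split <;> simp) A hA

/-- The cube generated by the origin and the vectors `e₁`, `e₁ + 2eᵢ`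
(`i = 2, …, n`) is lattice-regular: every hyperoctahedral symmetry of the
abstract cube (a signed permutation `(σ, ε)` of the generating directions,
acting on the vertex labels `s : Fin n → Bool`) is realized by a
lattice-affine transformation; in particular so are the generating
symmetries. -/
theorem cube3_lattice_regular (n : ℕ) (hn : 2 ≤ n)
    (σ : Equiv.Perm (Fin n)) (ε : Fin n → Bool) :
    ∃ (A : Matrix (Fin n) (Fin n) ℤ) (b : Fin n → ℤ),
      (A.det = 1 ∨ A.det = -1) ∧
      ∀ s : Fin n → Bool,
        A.mulVec (cubeVert n (cube3Gen n) s) + b =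
          cubeVert n (cube3Gen n) (fun i => xor (ε i) (s (σ i))) :=
  cube3_lattice_regular_general n σ ε
end

section
/- Let C be a lattice-regular lattice cube in ℤⁿ (n ≥ 2) whose edges have unit lattice length (C is elementary). Then C contains at most one lattice point in its interior, and if it contains one, that point is the center of the cube. -/
/-- The real point corresponding to an integer point. -/
def toRn (n : ℕ) (v : Fin n → ℤ) : Fin n → ℝ := fun i => (v i : ℝ)

open Matrix Set Finset in
private lemma affImage_interior {n : ℕ} (N : Matrix (Fin n) (Fin n) ℝ)
    (hN : Function.Injective N.mulVec) (c : Fin n → ℝ) (s : Set (Fin n → ℝ)) :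
    (fun y => c + N.mulVec y) '' interior s =
      interior ((fun y => c + N.mulVec y) '' s) := by
  have hN' : Function.Injective N.mulVecLin := by
    simpa [Matrix.coe_mulVecLin] using hN
  have hb : Function.Bijective N.mulVecLin :=
    ⟨hN', LinearMap.injective_iff_surjective.mp hN'⟩
  let e : (Fin n → ℝ) ≃ₗ[ℝ] (Fin n → ℝ) := LinearEquiv.ofBijective N.mulVecLin hb
  let h : (Fin n → ℝ) ≃ₜ (Fin n → ℝ) :=
    e.toContinuousLinearEquiv.toHomeomorph.trans (Homeomorph.addLeft c)
  have hh : ⇑h = fun y => c + N.mulVec y := by funext y; rfl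
  rw [← hh]
  exact h.image_interior s

private lemma t_eq_zero {n : ℕ} (w : Fin n → ℤ) (hw : ∀ d : ℤ, (∀ j, d ∣ w j) → IsUnit d)
    (t : ℝ) (z : Fin n → ℤ) (hz : ∀ j, (z j : ℝ) = t * (w j : ℝ)) (ht : |t| < 1) : t = 0 := by
  obtain ⟨j₀, hj₀⟩ : ∃ j, w j ≠ 0 := by
    by_contra h
    push_neg at h
    exact (by decide : ¬ IsUnit (2:ℤ)) (hw 2 (fun j => by rw [h j]; exact dvd_zero 2))
  set d : ℤ := w j₀ with hddef
  set a : ℤ := z j₀ with hadef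
  have hd0 : (d:ℝ) ≠ 0 := Int.cast_ne_zero.mpr hj₀
  have hta : (a:ℝ) = t * d := hz j₀
  have key : ∀ j, z j * d = a * w j := by
    intro j
    have : ((z j : ℝ)) * d = (a:ℝ) * w j := by rw [hz j, hta]; ring
    exact_mod_cast this
  set g : ℤ := (Int.gcd a d : ℤ) with hgdef
  have hg0 : g ≠ 0 := by
    simp only [hgdef, ne_eq, Int.natCast_eq_zero, Int.gcd_eq_zero_iff]
    rintro ⟨-, h2⟩; exact hj₀ h2
  obtain ⟨d', hd'⟩ : g ∣ d := Int.gcd_dvd_right a d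
  obtain ⟨a', ha'⟩ : g ∣ a := Int.gcd_dvd_left a d
  have hgpos : 0 < Int.gcd a d :=
    Nat.pos_of_ne_zero (fun h => hg0 (by rw [hgdef, h]; rfl))
  have hcop : IsCoprime a' d' := by
    rw [Int.isCoprime_iff_gcd_eq_one]
    have h1 : a / g = a' := by rw [ha']; exact Int.mul_ediv_cancel_left _ hg0
    have h2 : d / g = d' := by rw [hd']; exact Int.mul_ediv_cancel_left _ hg0
    rw [← h1, ← h2]
    exact Int.gcd_div_gcd_div_gcd hgpos
  have hdvd : ∀ j, d' ∣ w j := by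
    intro j
    have h1 : g * (a' * w j) = g * (z j * d') := by
      rw [← mul_assoc, ← ha', ← key j, hd']; ring
    have h2 : a' * w j = z j * d' := mul_left_cancel₀ hg0 h1
    exact hcop.symm.dvd_of_dvd_mul_left ⟨z j, by linear_combination h2⟩
  have hunit : d' = 1 ∨ d' = -1 := Int.isUnit_iff.mp (hw d' hdvd)
  have hda : d ∣ a := by
    rcases hunit with h | h
    · rw [ha', hd', h, mul_one]; exact Dvd.intro a' rfl
    · rw [ha', hd', h]; exact ⟨-a', by ring⟩
  obtain ⟨m, hm⟩ := hda
  have htm : t = (m : ℝ) := by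
    have h1 : (d:ℝ) * m = t * d := by rw [← hta, hm]; push_cast; ring
    have h2 : t * (d:ℝ) = (m:ℝ) * d := by linear_combination -h1
    exact mul_right_cancel₀ hd0 h2
  have hm1 : |m| < 1 := by
    have h2 : ((|m| : ℤ) : ℝ) < ((1:ℤ):ℝ) := by push_cast; rw [← htm]; exact ht
    exact_mod_cast h2
  have : m = 0 := by
    rcases abs_lt.mp hm1 with ⟨h1, h2⟩; omega
  rw [htm, this]; simp

private lemma cubeVert_false (n : ℕ) (v : Fin n → Fin n → ℤ) :
    cubeVert n v (fun _ => false) = 0 := by simp [cubeVert]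

private lemma cubeVert_single (n : ℕ) (v : Fin n → Fin n → ℤ) (k : Fin n) :
    cubeVert n v (fun i => decide (i = k)) = v k := by
  simp [cubeVert, Finset.sum_ite_eq']

private lemma cubeVert_pair (n : ℕ) (v : Fin n → Fin n → ℤ) {i k : Fin n} (hik : i ≠ k) :
    cubeVert n v (fun j => xor (decide (j = k)) (decide (j = i))) = v i + v k := by
  unfold cubeVert
  have h : ∀ j ∈ Finset.univ, (if xor (decide (j = k)) (decide (j = i)) = true then v j else 0)
      = (if j = i then v j else 0) + (if j = k then v j else 0) := by
    intro j _
    by_cases h1 : j = i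
    · subst h1
      have : j ≠ k := fun h => hik h
      simp [this]
    · by_cases h2 : j = k
      · subst h2; simp [h1]
      · simp [h1, h2]
  rw [Finset.sum_congr rfl h, Finset.sum_add_distrib]
  simp [Finset.sum_ite_eq']

private lemma cubeVert_apply (n : ℕ) (v : Fin n → Fin n → ℤ) (s : Fin n → Bool) (j : Fin n) :
    cubeVert n v s j = ∑ i : Fin n, if s i then v i j else 0 := by
  rw [cubeVert, Finset.sum_apply]
  exact Finset.sum_congr rfl (fun i _ => by by_cases h : s i <;> simp [h])

/-- A lattice-regular lattice cube whose edges have unit lattice length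
(i.e. whose generating vectors are primitive) contains at most one lattice
point in its interior, and such a point is necessarily the center
`P + (v₁ + ⋯ + vₙ)/2` of the cube. -/
theorem interior_point_of_elementary_regular_cube
    (n : ℕ) (hn : 2 ≤ n) (P : Fin n → ℤ) (v : Fin n → Fin n → ℤ)
    (hind : LinearIndependent ℝ (fun i => toRn n (v i)))
    (hprim : ∀ i, ∀ d : ℤ, (∀ j, d ∣ v i j) → IsUnit d)
    (hreg : ∀ (σ : Equiv.Perm (Fin n)) (ε : Fin n → Bool),
      ∃ (A : Matrix (Fin n) (Fin n) ℤ) (b : Fin n → ℤ),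
        (A.det = 1 ∨ A.det = -1) ∧
        ∀ s : Fin n → Bool,
          A.mulVec (P + cubeVert n v s) + b =
            P + cubeVert n v (fun i => xor (ε i) (s (σ i)))) :
    ∀ x : Fin n → ℤ,
      toRn n x ∈ interior (convexHull ℝ
        (Set.range fun s : Fin n → Bool => toRn n (P + cubeVert n v s))) →
      ∀ j, 2 * x j = 2 * P j + ∑ i : Fin n, v i j := by
  classical
  intro x hx
  set g : (Fin n → Bool) → (Fin n → ℝ) := fun s => toRn n (P + cubeVert n v s) with hgdef
  set S : Set (Fin n → ℝ) := convexHull ℝ (Set.range g) with hSdef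
  set M : Matrix (Fin n) (Fin n) ℝ := Matrix.of (fun j i => (v i j : ℝ)) with hMdef
  have hMinj : Function.Injective M.mulVec := by
    rw [Matrix.mulVec_injective_iff]
    exact hind
  -- every vertex is the image of a 0/1-vector
  have hvert : ∀ s : Fin n → Bool,
      g s = toRn n P + M.mulVec (fun i => if s i then (1:ℝ) else 0) := by
    intro s
    funext j
    simp only [hgdef, toRn, Pi.add_apply, Matrix.mulVec, dotProduct, hMdef,
      Matrix.of_apply]
    rw [cubeVert_apply n v s j, Int.cast_add, Int.cast_sum]
    congr 1
    exact Finset.sum_congr rfl (fun i _ => by by_cases h : s i <;> simp [h])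
  have hTconv : Convex ℝ ((fun y => toRn n P + M.mulVec y) '' Set.Icc 0 1) := by
    have h1 : Convex ℝ (Set.Icc (0 : Fin n → ℝ) 1) := convex_Icc 0 1
    have h2 := (h1.linear_image M.mulVecLin).translate (toRn n P)
    rw [Set.image_image] at h2
    simpa [Matrix.coe_mulVecLin] using h2
  have hSsub : S ⊆ (fun y => toRn n P + M.mulVec y) '' Set.Icc 0 1 := by
    rw [hSdef]
    apply convexHull_min _ hTconv
    rintro _ ⟨s, rfl⟩
    refine ⟨fun i => if s i then (1:ℝ) else 0,
      Set.mem_Icc.mpr ⟨fun i => ?_, fun i => ?_⟩, (hvert s).symm⟩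
    · by_cases h : s i <;> simp [h]
    · by_cases h : s i <;> simp [h]
  have hbox : interior (Set.Icc (0 : Fin n → ℝ) 1)
      = Set.pi Set.univ (fun _ => Set.Ioo (0:ℝ) 1) := by
    rw [← Set.pi_univ_Icc, interior_pi_set Set.finite_univ]
    simp [interior_Icc]
  have hmem := interior_mono hSsub hx
  rw [← affImage_interior M hMinj (toRn n P) (Set.Icc 0 1), hbox] at hmem
  obtain ⟨α, hα, hTα⟩ := hmem
  have hαIoo : ∀ i, 0 < α i ∧ α i < 1 := by
    intro i
    have := hα i (Set.mem_univ i)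
    exact ⟨this.1, this.2⟩
  have hxj : ∀ j, (x j : ℝ) = (P j : ℝ) + ∑ i : Fin n, (v i j : ℝ) * α i := by
    intro j
    have h1 := congrFun hTα j
    simp only [toRn, Pi.add_apply, Matrix.mulVec, dotProduct, hMdef,
      Matrix.of_apply] at h1
    exact h1.symm
  -- the coordinates of an interior lattice point are all 1/2
  have hhalf : ∀ k, α k = 1/2 := by
    intro k
    obtain ⟨A, b, hdet, hAb⟩ := hreg 1 (fun i => decide (i = k))
    have h0 : A.mulVec P + b = P + v k := by
      have h := hAb (fun _ => false)
      simpa [cubeVert_false, cubeVert_single, Bool.xor_false] using h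
    have hk : A.mulVec (v k) = -(v k) := by
      have h : A.mulVec (P + cubeVert n v (fun i => decide (i = k))) + b
          = P + cubeVert n v (fun i => xor (decide (i = k)) (decide (i = k))) :=
        hAb (fun i => decide (i = k))
      simp only [Bool.xor_self] at h
      rw [cubeVert_false, cubeVert_single, add_zero, Matrix.mulVec_add] at h
      linear_combination h - h0
    have hAv : ∀ i, A.mulVec (v i) = if i = k then -(v k) else v i := by
      intro i
      by_cases hik : i = k
      · subst hik; simpa using hk
      · have h : A.mulVec (P + cubeVert n v (fun j => decide (j = i))) + b
            = P + cubeVert n v (fun j => xor (decide (j = k)) (decide (j = i))) :=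
          hAb (fun j => decide (j = i))
        rw [cubeVert_single, cubeVert_pair n v hik, Matrix.mulVec_add] at h
        rw [if_neg hik]
        linear_combination h - h0
    set x' : Fin n → ℤ := A.mulVec x + b with hx'def
    have hx'j : ∀ j, (x' j : ℝ) = ((P j : ℝ) + (v k j : ℝ))
        + ∑ i : Fin n, α i * (((if i = k then -(v k j) else v i j) : ℤ) : ℝ) := by
      intro j
      have e0 : x' j = (∑ l, A j l * x l) + b j := by
        rw [hx'def]; simp [Matrix.mulVec, dotProduct]
      have e1 : (x' j : ℝ) = (∑ l, (A j l : ℝ) * (x l : ℝ)) + (b j : ℝ) := by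
        rw [e0]; push_cast; ring
      have e2 : ∀ l, (A j l : ℝ) * (x l : ℝ)
          = (A j l : ℝ) * (P l : ℝ) + ∑ i, (A j l : ℝ) * ((v i l : ℝ) * α i) := by
        intro l; rw [hxj l, mul_add, Finset.mul_sum]
      have e3 : (∑ l, (A j l : ℝ) * (P l : ℝ)) + (b j : ℝ) = (P j : ℝ) + (v k j : ℝ) := by
        have h' := congrFun h0 j
        have h'' : (∑ l, A j l * P l) + b j = P j + v k j := by
          simpa [Matrix.mulVec, dotProduct] using h'
        exact_mod_cast h''
      have e4 : ∀ i, (∑ l, (A j l : ℝ) * ((v i l : ℝ) * α i))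
          = α i * (((if i = k then -(v k j) else v i j) : ℤ) : ℝ) := by
        intro i
        have h' : (∑ l, A j l * v i l) = (if i = k then -(v k j) else v i j) := by
          have h1 := congrFun (hAv i) j
          have h2 : (A.mulVec (v i)) j = ∑ l, A j l * v i l := by
            simp [Matrix.mulVec, dotProduct]
          rw [h2] at h1
          rw [h1]
          by_cases h : i = k <;> simp [h]
        have h'' : (∑ l, (A j l : ℝ) * (v i l : ℝ))
            = (((if i = k then -(v k j) else v i j) : ℤ) : ℝ) := by
          rw [← h']; push_cast; ring
        calc ∑ l, (A j l : ℝ) * ((v i l : ℝ) * α i)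
            = (∑ l, (A j l : ℝ) * (v i l : ℝ)) * α i := by
              rw [Finset.sum_mul]; exact Finset.sum_congr rfl fun l _ => by ring
          _ = α i * (((if i = k then -(v k j) else v i j) : ℤ) : ℝ) := by rw [h'']; ring
      calc (x' j : ℝ) = (∑ l, (A j l : ℝ) * (x l : ℝ)) + (b j : ℝ) := e1
        _ = ((∑ l, (A j l : ℝ) * (P l : ℝ)) + (b j : ℝ))
            + ∑ l, ∑ i, (A j l : ℝ) * ((v i l : ℝ) * α i) := by
              rw [Finset.sum_congr rfl (fun l _ => e2 l), Finset.sum_add_distrib]; ring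
        _ = ((P j : ℝ) + (v k j : ℝ))
            + ∑ i, ∑ l, (A j l : ℝ) * ((v i l : ℝ) * α i) := by rw [e3, Finset.sum_comm]
        _ = ((P j : ℝ) + (v k j : ℝ))
            + ∑ i, α i * (((if i = k then -(v k j) else v i j) : ℤ) : ℝ) := by
              rw [Finset.sum_congr rfl (fun i _ => e4 i)]
    have hdiff : ∀ j, (((x - x') j : ℤ) : ℝ) = (2 * α k - 1) * (v k j : ℝ) := by
      intro j
      have hsub : (((x - x') j : ℤ) : ℝ) = (x j : ℝ) - (x' j : ℝ) := by
        rw [Pi.sub_apply]; push_cast; ring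
      rw [hsub, hxj j, hx'j j]
      have hterm : ∀ i, (v i j : ℝ) * α i
          - α i * (((if i = k then -(v k j) else v i j) : ℤ) : ℝ)
          = if i = k then 2 * α k * (v k j : ℝ) else 0 := by
        intro i
        by_cases h : i = k
        · subst h; simp only [if_pos rfl]; push_cast; ring
        · simp only [if_neg h]; ring
      have hsplit : (∑ i, (v i j : ℝ) * α i)
          - ∑ i, α i * (((if i = k then -(v k j) else v i j) : ℤ) : ℝ)
          = 2 * α k * (v k j : ℝ) := by
        rw [← Finset.sum_sub_distrib, Finset.sum_congr rfl (fun i _ => hterm i)]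
        simp [Finset.sum_ite_eq']
      linear_combination hsplit
    have habs : |2 * α k - 1| < 1 := by
      rcases hαIoo k with ⟨h1, h2⟩
      rw [abs_lt]; constructor <;> linarith
    have ht0 := t_eq_zero (v k) (hprim k) (2 * α k - 1) (x - x') hdiff habs
    linarith
  intro j
  have hs : ∑ i : Fin n, (v i j : ℝ) * α i = ∑ i : Fin n, (v i j : ℝ) * (1/2) :=
    Finset.sum_congr rfl (fun i _ => by rw [hhalf i])
  have hs2 : ∑ i : Fin n, (2:ℝ) * ((v i j : ℝ) * (1/2)) = ∑ i : Fin n, (v i j : ℝ) :=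
    Finset.sum_congr rfl (fun i _ => by ring)
  have hfin : ((2 * x j : ℤ) : ℝ) = ((2 * P j + ∑ i : Fin n, v i j : ℤ) : ℝ) := by
    push_cast
    rw [hxj j, hs, mul_add, Finset.mul_sum, hs2]
  exact_mod_cast hfin
end

section
/- Suppose the three-dimensional simplex with vertices V₀ = 0, V₁ = e₁, V₂ = e₂, V₃ = a₁e₁ + a₂e₂ + b·e₃ (with b ≥ 1, 0 ≤ a₁,a₂ < b) is lattice-regular. Then a₁ = a₂ = b − 1 and b ∈ {1, 2, 4}. -/
/-!
The first coordinate of an integral affine map is an integral affine functional `ℓ`, and since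
`V₃ = a₁V₁ + a₂V₂ + b e₃`, every such `ℓ` satisfies
`ℓ V₃ - ℓ V₀ ≡ a₁ (ℓ V₁ - ℓ V₀) + a₂ (ℓ V₂ - ℓ V₀) [ZMOD b]`.
Reading this off for the transpositions `(1 2)`, `(0 1)` and `(0 3)` of the vertices gives
`a₁ ≡ a₂`, `2a₁ + a₂ ≡ 1` and `a₁² + a₁a₂ ≡ 2a₁` modulo `b`. The bounds `0 ≤ aᵢ < b` turn the
first into `a₁ = a₂ = a`, and then `b ∣ 3a - 1` and `b ∣ 2a(a - 1)` force
`b ∣ 2(3a - 1)(3a - 2) - 9 · 2a(a - 1) = 4`.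
-/

namespace LatticeSimplex

open Matrix

abbrev vertex (a₁ a₂ b : ℤ) : Fin 4 → Fin 3 → ℤ :=
  ![![0, 0, 0], ![1, 0, 0], ![0, 1, 0], ![a₁, a₂, b]]

theorem affineMap_vertex_modEq (A : Matrix (Fin 3) (Fin 3) ℤ) (c : Fin 3 → ℤ)
    (a₁ a₂ b : ℤ) (i : Fin 3) :
    (A *ᵥ vertex a₁ a₂ b 3 + c) i - (A *ᵥ vertex a₁ a₂ b 0 + c) i ≡
      a₁ * ((A *ᵥ vertex a₁ a₂ b 1 + c) i - (A *ᵥ vertex a₁ a₂ b 0 + c) i) +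
      a₂ * ((A *ᵥ vertex a₁ a₂ b 2 + c) i - (A *ᵥ vertex a₁ a₂ b 0 + c) i) [ZMOD b] := by
  refine Int.modEq_iff_dvd.mpr ⟨-A i 2, ?_⟩
  simp only [vertex, mulVec, dotProduct, Fin.sum_univ_three, Pi.add_apply, cons_val_zero,
    cons_val_one, cons_val]
  ring

def IsAffinelyRealized (a₁ a₂ b : ℤ) (σ : Equiv.Perm (Fin 4)) : Prop :=
  ∃ (A : Matrix (Fin 3) (Fin 3) ℤ) (c : Fin 3 → ℤ),
    ∀ k, A *ᵥ vertex a₁ a₂ b k + c = vertex a₁ a₂ b (σ k)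

theorem IsAffinelyRealized.vertex_modEq {a₁ a₂ b : ℤ} {σ : Equiv.Perm (Fin 4)}
    (hσ : IsAffinelyRealized a₁ a₂ b σ) (i : Fin 3) :
    vertex a₁ a₂ b (σ 3) i - vertex a₁ a₂ b (σ 0) i ≡
      a₁ * (vertex a₁ a₂ b (σ 1) i - vertex a₁ a₂ b (σ 0) i) +
      a₂ * (vertex a₁ a₂ b (σ 2) i - vertex a₁ a₂ b (σ 0) i) [ZMOD b] := by
  obtain ⟨A, c, hAc⟩ := hσ
  simpa only [hAc] using affineMap_vertex_modEq A c a₁ a₂ b i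

theorem dvd_four_of_dvd {a b : ℤ} (h₁ : b ∣ 3 * a - 1) (h₂ : b ∣ 2 * a * (a - 1)) : b ∣ 4 := by
  have h : b ∣ 2 * (3 * a - 1) * (3 * a - 2) - 9 * (2 * a * (a - 1)) :=
    dvd_sub (dvd_mul_of_dvd_left (dvd_mul_of_dvd_right h₁ 2) _) (dvd_mul_of_dvd_right h₂ 9)
  convert h using 1
  ring

theorem eq_sub_one_of_dvd {a b : ℤ} (hb : 1 ≤ b) (ha : 0 ≤ a) (hab : a < b)
    (h₁ : b ∣ 3 * a - 1) (h₂ : b ∣ 2 * a * (a - 1)) :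
    a = b - 1 ∧ (b = 1 ∨ b = 2 ∨ b = 4) := by
  have h₄ := dvd_four_of_dvd h₁ h₂
  have hb₄ : b ≤ 4 := Int.le_of_dvd (by norm_num) h₄
  interval_cases b <;> interval_cases a <;> omega

end LatticeSimplex

open LatticeSimplex in
/-- If the three-dimensional simplex with vertices `0, e₁, e₂,
a₁e₁ + a₂e₂ + b·e₃` (with `b ≥ 1`, `0 ≤ a₁, a₂ < b`) is lattice-regular
(every permutation of its vertices is realized by a lattice-affine
transformation), then `a₁ = a₂ = b - 1` and `b ∈ {1, 2, 4}`. -/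
theorem regular_three_dim_simplex_classification
    (a₁ a₂ b : ℤ) (hb : 1 ≤ b)
    (h₁ : 0 ≤ a₁) (h₁' : a₁ < b) (h₂ : 0 ≤ a₂) (h₂' : a₂ < b)
    (hreg : ∀ σ : Equiv.Perm (Fin 4),
      ∃ (A : Matrix (Fin 3) (Fin 3) ℤ) (c : Fin 3 → ℤ),
        (A.det = 1 ∨ A.det = -1) ∧
        ∀ k : Fin 4,
          A.mulVec (![![0,0,0], ![1,0,0], ![0,1,0], ![a₁,a₂,b]] k) + c =
            ![![0,0,0], ![1,0,0], ![0,1,0], ![a₁,a₂,b]] (σ k)) :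
    a₁ = b - 1 ∧ a₂ = b - 1 ∧ (b = 1 ∨ b = 2 ∨ b = 4) := by
  have realized (σ : Equiv.Perm (Fin 4)) : IsAffinelyRealized a₁ a₂ b σ :=
    let ⟨A, c, _, hAc⟩ := hreg σ; ⟨A, c, hAc⟩
  have h₁₂ : a₁ ≡ a₂ [ZMOD b] := by
    simpa [vertex, Equiv.swap_apply_def] using (realized (Equiv.swap 1 2)).vertex_modEq 0
  have h₀₁ : a₁ - 1 ≡ -a₁ + -a₂ [ZMOD b] := by
    simpa [vertex, Equiv.swap_apply_def] using (realized (Equiv.swap 0 1)).vertex_modEq 0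
  have h₀₃ : -a₁ ≡ a₁ * (1 - a₁) + -(a₂ * a₁) [ZMOD b] := by
    simpa [vertex, Equiv.swap_apply_def] using (realized (Equiv.swap 0 3)).vertex_modEq 0
  have ha : a₁ = a₂ := by
    rw [← Int.emod_eq_of_lt h₁ h₁', ← Int.emod_eq_of_lt h₂ h₂']
    exact h₁₂
  subst ha
  have hd₁ : b ∣ 3 * a₁ - 1 := by convert h₀₁.symm.dvd using 1; ring
  have hd₂ : b ∣ 2 * a₁ * (a₁ - 1) := by convert h₀₃.symm.dvd using 1; ring
  obtain ⟨ha, hb₄⟩ := eq_sub_one_of_dvd hb h₁ h₁' hd₁ hd₂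
  exact ⟨ha, ha, hb₄⟩
end
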